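/- Let D be the 2^{2n} × (2n+2) design generated from G = (v, I_n) with k_1 = f_1 + 2f_2 + f_3 + 1, k_2 = 2f_1 + 2f_3 + 2, ρ = 2^{−⌊(f_1+f_3)/2⌋}. Then the generalized resolution of D equals k_2 if k_1 ≥ k_2, and equals k_1 + 1 − ρ otherwise. -/

import Mathlib

open Finset

/-- The Gray map `φ : Z₄ → {−1,1}²`: φ(0)=(1,1), φ(1)=(1,−1), φ(2)=(−1,−1), φ(3)=(−1,1). -/
def gray (x : ZMod 4) : Fin 2 → ℤ := fun c =>
  if c = 0 then (if x = 0 ∨ x = 1 then 1 else -1)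
  else (if x = 0 ∨ x = 3 then 1 else -1)

/-- The `2^{2n} × (2n+2)` two-level design which is the Gray-map image of the quaternary
code generated by `G = (v, Iₙ)`.  Rows are indexed by `u : Fin n → ZMod 4`; the codeword is
`(∑ uᵢvᵢ, u₁, …, uₙ)` and each `Z₄`-coordinate gives two ±1 columns via the Gray map. -/
def Dv {n : ℕ} (v : Fin n → ZMod 4) :
    (Fin n → ZMod 4) → (Fin (n + 1) × Fin 2) → ℤ :=
  fun u p => gray ((Fin.cons (∑ i, u i * v i) u : Fin (n + 1) → ZMod 4) p.1) p.2

/-- The J-characteristic `j(s; D) = ∑ᵢ ∏_{c ∈ s} D i c`. -/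
def Jchar {I J : Type*} [Fintype I] (D : I → J → ℤ) (s : Finset J) : ℤ :=
  ∑ i, ∏ c ∈ s, D i c

/-- The aliasing index `ρ(s; D) = |j(s; D)| / N`. -/
def rho {I J : Type*} [Fintype I] (D : I → J → ℤ) (s : Finset J) : ℚ :=
  |(Jchar D s : ℚ)| / (Fintype.card I : ℚ)

/-- `freq v z` = number of occurrences of `z ∈ Z₄` in the vector `v`. -/
def freq {n : ℕ} (v : Fin n → ZMod 4) (z : ZMod 4) : ℕ :=
  (Finset.univ.filter fun i => v i = z).card

/-- A design has projectivity (at least) `p` if every projection onto `p` columns contains a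
complete `2^p` factorial. -/
def hasProjectivity {I J : Type*} (D : I → J → ℤ) (p : ℕ) : Prop :=
  ∀ s : Finset J, s.card = p → ∀ ε : J → ℤ, (∀ c, ε c = 1 ∨ ε c = -1) →
    ∃ i, ∀ c ∈ s, D i c = ε c

/-- `hasResolution D R` : the generalized resolution of `D` equals `R`, i.e.
`R = r + 1 − max_{|s| = r} ρ(s; D)` where `r` is the smallest size of a (nonempty) column
subset with positive aliasing index. -/
def hasResolution {I J : Type*} [Fintype I] (D : I → J → ℤ) (R : ℚ) : Prop :=
  ∃ (r : ℕ) (m : ℚ),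
    (∃ s : Finset J, s.card = r ∧ 0 < rho D s) ∧
    (∀ s : Finset J, s.Nonempty → s.card < r → rho D s = 0) ∧
    (∃ s : Finset J, s.card = r ∧ rho D s = m) ∧
    (∀ s : Finset J, s.card = r → rho D s ≤ m) ∧
    R = (r : ℚ) + 1 - m

/-- The generalized wordlength pattern `A_k(D) = ∑_{|s| = k} ρ(s; D)²`. -/
def Apattern {I J : Type*} [Fintype I] [Fintype J] (D : I → J → ℤ) (k : ℕ) : ℚ :=
  ∑ s ∈ Finset.powersetCard k Finset.univ, (rho D s) ^ 2

/-- The half-fraction of `D` obtained by keeping the rows where the branching column `b`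
equals `+1` and deleting column `b`. -/
def halfFraction {I J : Type*} (D : I → J → ℤ) (b : J) :
    {i : I // D i b = 1} → {c : J // c ≠ b} → ℤ :=
  fun i c => D i.1 c.1

/-- Sequential (lexicographic) comparison of generalized wordlength patterns:
`D` has no more aberration than `D'`. -/
def wlpLe {I I' J : Type*} [Fintype I] [Fintype I'] [Fintype J]
    (D : I → J → ℤ) (D' : I' → J → ℤ) : Prop :=
  ∀ k : ℕ, (∀ j < k, Apattern D j = Apattern D' j) → Apattern D k ≤ Apattern D' k


/-!
Write `T j = colsAt s j` for the columns of `s` lying over the `Z₄`-coordinate `j`. Every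
product of Gray columns is the real part of a character value,
`grayProd T y = Re (grayCoeff T * i ^ (|T| y))`, so the sum over the rows `u ∈ Z₄ⁿ` factorises:
`j(s) = Re (grayCoeff (T 0) * ∏ᵢ graySum (T (i+1)) (|T 0| vᵢ))`, a product of discrete Fourier
coefficients of Gray products. The coefficient `graySum T m` vanishes unless `|T|` is the Lee
weight of `m`; this forces `|s| = k₁` (if `|T 0| = 1`) or `|s| = k₂` (if `|T 0| = 2`) whenever
`s ≠ ∅` and `j(s) ≠ 0`. For `|T 0| = 2` the word with the forced column sizes has `j(s) = 4ⁿ`,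
i.e. `ρ = 1`. For `|T 0| = 1` the product is `iᵗ (1 + i)^N` with `N = 4n + 1 - (f₁ + f₃)`, whose
real part is at most `2^⌊N/2⌋ = 4ⁿ 2^(-⌊(f₁+f₃)/2⌋)` in absolute value; moving the column over
coordinate `0` multiplies the product by `i`, so one of the two choices attains this bound.
-/

local notation "ℤ[i]" => GaussianInt

theorem abs_Jchar_le_card {I J : Type*} [Fintype I] {D : I → J → ℤ} (hD : ∀ i c, |D i c| ≤ 1)
    (s : Finset J) : |Jchar D s| ≤ Fintype.card I := by
  calc |Jchar D s| ≤ ∑ i, |∏ c ∈ s, D i c| := abs_sum_le_sum_abs _ _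
    _ ≤ ∑ _i : I, 1 := sum_le_sum fun i _ => by
        rw [abs_prod]
        exact prod_le_one (fun _ _ => abs_nonneg _) fun c _ => hD i c
    _ = Fintype.card I := by simp

theorem rho_le_one {I J : Type*} [Fintype I] {D : I → J → ℤ} (hD : ∀ i c, |D i c| ≤ 1)
    (s : Finset J) : rho D s ≤ 1 :=
  div_le_one_of_le₀ (by exact_mod_cast abs_Jchar_le_card hD s) (by positivity)

theorem rho_eq_zero_of_Jchar_eq_zero {I J : Type*} [Fintype I] {D : I → J → ℤ} {s : Finset J}
    (h : Jchar D s = 0) : rho D s = 0 := by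
  simp [rho, h]

def ofCols {α β : Type*} [Fintype α] [Fintype β] [DecidableEq β] (T : α → Finset β) :
    Finset (α × β) :=
  univ.filter fun p => p.2 ∈ T p.1

section Columns

variable {α β : Type*} [DecidableEq α] [DecidableEq β] [Fintype β]

def colsAt (s : Finset (α × β)) (a : α) : Finset β := univ.filter fun b => (a, b) ∈ s

@[simp] theorem mem_colsAt {s : Finset (α × β)} {a : α} {b : β} :
    b ∈ colsAt s a ↔ (a, b) ∈ s := by
  simp [colsAt]

@[simp] theorem colsAt_ofCols [Fintype α] (T : α → Finset β) (a : α) :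
    colsAt (ofCols T) a = T a := by
  ext b
  simp [ofCols]

theorem prod_eq_prod_colsAt [Fintype α] {M : Type*} [CommMonoid M] (s : Finset (α × β))
    (f : α × β → M) : ∏ p ∈ s, f p = ∏ a, ∏ b ∈ colsAt s a, f (a, b) :=
  prod_finset_product s univ (colsAt s) (by simp)

theorem card_eq_sum_card_colsAt [Fintype α] (s : Finset (α × β)) :
    s.card = ∑ a, (colsAt s a).card := by
  rw [card_eq_sum_ones, sum_finset_product s univ (colsAt s) (by simp)]
  simp

end Columns

theorem Zsqrtd.re_sum {d : ℤ} {ι : Type*} (s : Finset ι) (f : ι → ℤ√d) :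
    (∑ i ∈ s, f i).re = ∑ i ∈ s, (f i).re :=
  map_sum (AddMonoidHom.mk' Zsqrtd.re Zsqrtd.re_add) f s

def iChar : AddChar (ZMod 4) ℤ[i] := AddChar.zmodChar 4 (ζ := Zsqrtd.sqrtd) (by decide)

theorem iChar_sum {ι : Type*} (s : Finset ι) (f : ι → ZMod 4) :
    iChar (∑ i ∈ s, f i) = ∏ i ∈ s, iChar (f i) := by
  induction s using Finset.cons_induction with
  | empty => simp
  | cons a s ha ih => rw [sum_cons, prod_cons, AddChar.map_add_eq_mul, ih]

theorem one_add_sqrtd_sq : (1 + Zsqrtd.sqrtd : ℤ[i]) ^ 2 = 2 * iChar 1 := by decide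

theorem re_iChar_mul_one_add_sqrtd_pow (t : ZMod 4) (N : ℕ) :
    (iChar t * (1 + Zsqrtd.sqrtd) ^ N).re
      = 2 ^ (N / 2) * (iChar (t + (N / 2 : ℕ)) * (1 + Zsqrtd.sqrtd) ^ (N % 2)).re := by
  have hpow : (1 + Zsqrtd.sqrtd : ℤ[i]) ^ N
      = ((2 ^ (N / 2) : ℤ) : ℤ[i]) * iChar (N / 2 : ℕ) * (1 + Zsqrtd.sqrtd) ^ (N % 2) := by
    conv_lhs => rw [← Nat.div_add_mod N 2, pow_add, pow_mul, one_add_sqrtd_sq, mul_pow,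
      ← AddChar.map_nsmul_eq_pow, nsmul_eq_mul, mul_one]
    push_cast
    ring
  rw [hpow, AddChar.map_add_eq_mul, ← Zsqrtd.re_smul]
  ring_nf

theorem abs_re_iChar_mul_one_add_sqrtd_le :
    ∀ (t : ZMod 4) (e : ℕ), e < 2 → |(iChar t * (1 + Zsqrtd.sqrtd) ^ e).re| ≤ 1 := by
  decide

theorem abs_re_iChar_mul_one_add_sqrtd_eq_one_or : ∀ (t : ZMod 4) (e : ℕ), e < 2 →
    |(iChar t * (1 + Zsqrtd.sqrtd) ^ e).re| = 1 ∨
      |(iChar (t + 1) * (1 + Zsqrtd.sqrtd) ^ e).re| = 1 := by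
  decide

theorem abs_re_iChar_mul_one_add_sqrtd_pow_le (t : ZMod 4) (N : ℕ) :
    |(iChar t * (1 + Zsqrtd.sqrtd) ^ N).re| ≤ 2 ^ (N / 2) := by
  rw [re_iChar_mul_one_add_sqrtd_pow, abs_mul, abs_of_pos (by positivity)]
  exact mul_le_of_le_one_right (by positivity)
    (abs_re_iChar_mul_one_add_sqrtd_le _ _ (Nat.mod_lt N two_pos))

theorem abs_re_iChar_mul_one_add_sqrtd_pow_eq_or (t : ZMod 4) (N : ℕ) :
    |(iChar t * (1 + Zsqrtd.sqrtd) ^ N).re| = 2 ^ (N / 2) ∨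
      |(iChar (t + 1) * (1 + Zsqrtd.sqrtd) ^ N).re| = 2 ^ (N / 2) := by
  rw [re_iChar_mul_one_add_sqrtd_pow t N, re_iChar_mul_one_add_sqrtd_pow (t + 1) N, abs_mul,
    abs_mul, abs_of_pos (by positivity), add_right_comm t 1]
  rcases abs_re_iChar_mul_one_add_sqrtd_eq_one_or (t + (N / 2 : ℕ)) (N % 2)
    (Nat.mod_lt N two_pos) with h | h <;> simp only [h, mul_one, true_or, or_true]

def leeWeight (m : ZMod 4) : ℕ := min m.val (4 - m.val)

def grayProd (T : Finset (Fin 2)) (y : ZMod 4) : ℤ := ∏ c ∈ T, gray y c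

def grayCoeff (T : Finset (Fin 2)) : ℤ[i] :=
  if T = {0} then ⟨1, -1⟩ else if T = {1} then ⟨1, 1⟩ else 1

def graySum (T : Finset (Fin 2)) (m : ZMod 4) : ℤ[i] :=
  ∑ y, (grayProd T y : ℤ[i]) * iChar (m * y)

def leeCols (m : ZMod 4) : Finset (Fin 2) := univ.filter fun c => c.val < leeWeight m

theorem abs_gray_le_one : ∀ (y : ZMod 4) (c : Fin 2), |gray y c| ≤ 1 := by decide

theorem grayProd_eq_re : ∀ (T : Finset (Fin 2)) (y : ZMod 4),
    grayProd T y = (grayCoeff T * iChar (T.card * y)).re := by decide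

theorem grayCoeff_ne_zero : ∀ T : Finset (Fin 2), grayCoeff T ≠ 0 := by decide

theorem grayCoeff_univ : grayCoeff univ = 1 := by decide

theorem grayCoeff_singleton_one : grayCoeff {1} = iChar 1 * grayCoeff {0} := by decide

theorem exists_grayCoeff_eq : ∀ T : Finset (Fin 2), T.card = 1 →
    ∃ t, grayCoeff T = iChar t * (1 + Zsqrtd.sqrtd) := by decide

theorem graySum_ne_zero_iff : ∀ (T : Finset (Fin 2)) (m : ZMod 4),
    graySum T m ≠ 0 ↔ T.card = leeWeight m := by decide

theorem graySum_two_mul : ∀ (T : Finset (Fin 2)) (z : ZMod 4),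
    T.card = leeWeight (2 * z) → graySum T (2 * z) = 4 := by decide

theorem exists_graySum_eq : ∀ (T : Finset (Fin 2)) (m : ZMod 4), T.card = leeWeight m →
    ∃ t, graySum T m = iChar t * (1 + Zsqrtd.sqrtd) ^ (4 - m.val % 2) := by decide

theorem card_leeCols : ∀ m : ZMod 4, (leeCols m).card = leeWeight m := by decide

theorem leeWeight_two_mul : ∀ z : ZMod 4, leeWeight (2 * z) = 2 * (z.val % 2) := by decide

theorem sum_zmod_four {M : Type*} [AddCommMonoid M] (f : ZMod 4 → M) :
    ∑ z, f z = f 0 + f 1 + f 2 + f 3 :=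
  Fin.sum_univ_four f

section Design

variable {n : ℕ} (v : Fin n → ZMod 4)

theorem sum_comp_eq_sum_freq_mul (g : ZMod 4 → ℕ) :
    ∑ i, g (v i) = ∑ z, freq v z * g z := by
  rw [← sum_fiberwise univ v (fun i => g (v i))]
  refine sum_congr rfl fun z _ => ?_
  rw [freq, sum_congr rfl fun i hi => by rw [(mem_filter.1 hi).2], sum_const, smul_eq_mul]

theorem sum_val_mod_two : ∑ i, (v i).val % 2 = freq v 1 + freq v 3 := by
  rw [sum_comp_eq_sum_freq_mul v fun z => z.val % 2, sum_zmod_four]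
  change freq v 0 * 0 + freq v 1 * 1 + freq v 2 * 0 + freq v 3 * 1 = _
  ring

theorem sum_leeWeight : ∑ i, leeWeight (v i) = freq v 1 + 2 * freq v 2 + freq v 3 := by
  rw [sum_comp_eq_sum_freq_mul v leeWeight, sum_zmod_four]
  change freq v 0 * 0 + freq v 1 * 1 + freq v 2 * 2 + freq v 3 * 1 = _
  ring

def jWord (s : Finset (Fin (n + 1) × Fin 2)) : ℤ[i] :=
  grayCoeff (colsAt s 0) * ∏ i : Fin n, graySum (colsAt s i.succ) ((colsAt s 0).card * v i)

theorem prod_Dv_eq (s : Finset (Fin (n + 1) × Fin 2)) (u : Fin n → ZMod 4) :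
    ∏ p ∈ s, Dv v u p
      = grayProd (colsAt s 0) (∑ i, u i * v i) * ∏ i, grayProd (colsAt s i.succ) (u i) := by
  rw [prod_eq_prod_colsAt, Fin.prod_univ_succ]
  simp [Dv, grayProd]

theorem Jchar_Dv_eq_re (s : Finset (Fin (n + 1) × Fin 2)) :
    Jchar (Dv v) s = (jWord v s).re := by
  set T := colsAt s
  calc Jchar (Dv v) s
      = ∑ u : Fin n → ZMod 4,
          grayProd (T 0) (∑ i, u i * v i) * ∏ i, grayProd (T i.succ) (u i) := by
        simp only [Jchar, prod_Dv_eq, T]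
    _ = ∑ u : Fin n → ZMod 4, (grayCoeff (T 0) *
          ∏ i, (grayProd (T i.succ) (u i) : ℤ[i]) * iChar ((T 0).card * v i * u i)).re := by
        refine sum_congr rfl fun u _ => ?_
        rw [grayProd_eq_re, mul_comm, ← Zsqrtd.re_smul, mul_sum, iChar_sum, prod_mul_distrib]
        push_cast
        simp only [mul_assoc, mul_comm (u _)]
        ring_nf
    _ = (jWord v s).re := by
        rw [← Zsqrtd.re_sum, ← mul_sum, jWord]
        simp only [graySum, Fintype.prod_sum, T]

theorem jWord_ne_zero_of_Jchar_ne_zero {s : Finset (Fin (n + 1) × Fin 2)}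
    (h : Jchar (Dv v) s ≠ 0) : jWord v s ≠ 0 := by
  rintro hW
  rw [Jchar_Dv_eq_re, hW] at h
  exact h rfl

theorem card_colsAt_succ_of_jWord_ne_zero {s : Finset (Fin (n + 1) × Fin 2)}
    (h : jWord v s ≠ 0) (i : Fin n) :
    (colsAt s i.succ).card = leeWeight ((colsAt s 0).card * v i) :=
  (graySum_ne_zero_iff _ _).1 (prod_ne_zero_iff.1 (right_ne_zero_of_mul h) i (mem_univ i))

theorem card_eq_of_jWord_ne_zero {s : Finset (Fin (n + 1) × Fin 2)} (h : jWord v s ≠ 0) :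
    s.card = (colsAt s 0).card + ∑ i, leeWeight ((colsAt s 0).card * v i) := by
  rw [card_eq_sum_card_colsAt, Fin.sum_univ_succ]
  simp only [card_colsAt_succ_of_jWord_ne_zero v h]

theorem card_colsAt_zero_of_Jchar_ne_zero {s : Finset (Fin (n + 1) × Fin 2)} (hs : s.Nonempty)
    (h : Jchar (Dv v) s ≠ 0) : (colsAt s 0).card = 1 ∨ (colsAt s 0).card = 2 := by
  have hcard := card_eq_of_jWord_ne_zero v (jWord_ne_zero_of_Jchar_ne_zero v h)
  have hle : (colsAt s 0).card ≤ 2 := card_le_univ _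
  interval_cases hk : (colsAt s 0).card
  · simp [leeWeight, hs.ne_empty] at hcard
  · exact Or.inl rfl
  · exact Or.inr rfl

theorem card_eq_of_card_colsAt_zero_eq_one {s : Finset (Fin (n + 1) × Fin 2)}
    (h0 : (colsAt s 0).card = 1) (h : Jchar (Dv v) s ≠ 0) :
    s.card = freq v 1 + 2 * freq v 2 + freq v 3 + 1 := by
  rw [card_eq_of_jWord_ne_zero v (jWord_ne_zero_of_Jchar_ne_zero v h), h0, Nat.cast_one]
  simp only [one_mul, sum_leeWeight]
  ring

theorem card_eq_of_card_colsAt_zero_eq_two {s : Finset (Fin (n + 1) × Fin 2)}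
    (h0 : (colsAt s 0).card = 2) (h : Jchar (Dv v) s ≠ 0) :
    s.card = 2 * freq v 1 + 2 * freq v 3 + 2 := by
  rw [card_eq_of_jWord_ne_zero v (jWord_ne_zero_of_Jchar_ne_zero v h), h0, Nat.cast_ofNat]
  simp only [leeWeight_two_mul, ← mul_sum, sum_val_mod_two]
  ring

theorem jWord_eq_of_card_colsAt_zero_eq_one {s : Finset (Fin (n + 1) × Fin 2)}
    (h0 : (colsAt s 0).card = 1) (h : jWord v s ≠ 0) :
    ∃ t N, N + (freq v 1 + freq v 3) = 4 * n + 1 ∧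
      jWord v s = iChar t * (1 + Zsqrtd.sqrtd) ^ N := by
  obtain ⟨t₀, ht₀⟩ := exists_grayCoeff_eq _ h0
  have hmatch := card_colsAt_succ_of_jWord_ne_zero v h
  simp only [h0, Nat.cast_one, one_mul] at hmatch
  choose t ht using fun i => exists_graySum_eq _ _ (hmatch i)
  refine ⟨t₀ + ∑ i, t i, 1 + ∑ i, (4 - (v i).val % 2), ?_, ?_⟩
  · have hsum : ∑ i, (4 - (v i).val % 2) + ∑ i, (v i).val % 2 = 4 * n := by
      rw [← sum_add_distrib, sum_congr rfl fun i _ => Nat.sub_add_cancel (by omega)]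
      simp [mul_comm]
    rw [← sum_val_mod_two]
    omega
  · simp only [jWord, h0, Nat.cast_one, one_mul, ht₀, ht, prod_mul_distrib, prod_pow_eq_pow_sum,
      AddChar.map_add_eq_mul, iChar_sum, pow_add]
    ring

theorem rho_Dv_eq (s : Finset (Fin (n + 1) × Fin 2)) :
    rho (Dv v) s = |(Jchar (Dv v) s : ℚ)| / 4 ^ n := by
  simp [rho, ZMod.card]

theorem two_pow_div_four_pow {N F : ℕ} (h : N + F = 4 * n + 1) :
    (2 : ℚ) ^ (N / 2) / 4 ^ n = 1 / 2 ^ (F / 2) := by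
  rw [div_eq_div_iff (by positivity) (by positivity), one_mul, ← pow_add,
    show (4 : ℚ) = 2 ^ 2 by norm_num, ← pow_mul]
  congr 1
  omega

theorem rho_Dv_le_of_card_colsAt_zero_eq_one {s : Finset (Fin (n + 1) × Fin 2)}
    (h0 : (colsAt s 0).card = 1) : rho (Dv v) s ≤ 1 / 2 ^ ((freq v 1 + freq v 3) / 2) := by
  by_cases hJ : Jchar (Dv v) s = 0
  · rw [rho_eq_zero_of_Jchar_eq_zero hJ]
    positivity
  obtain ⟨t, N, hN, hW⟩ :=
    jWord_eq_of_card_colsAt_zero_eq_one v h0 (jWord_ne_zero_of_Jchar_ne_zero v hJ)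
  rw [rho_Dv_eq, ← two_pow_div_four_pow hN, Jchar_Dv_eq_re, hW]
  gcongr
  exact_mod_cast abs_re_iChar_mul_one_add_sqrtd_pow_le t N

def leeWord (T₀ : Finset (Fin 2)) : Finset (Fin (n + 1) × Fin 2) :=
  ofCols (Fin.cons T₀ fun i => leeCols (T₀.card * v i))

theorem jWord_leeWord (T₀ : Finset (Fin 2)) :
    jWord v (leeWord v T₀)
      = grayCoeff T₀ * ∏ i, graySum (leeCols (T₀.card * v i)) (T₀.card * v i) := by
  simp [jWord, leeWord]

theorem jWord_leeWord_ne_zero (T₀ : Finset (Fin 2)) : jWord v (leeWord v T₀) ≠ 0 := by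
  rw [jWord_leeWord]
  exact mul_ne_zero (grayCoeff_ne_zero T₀)
    (prod_ne_zero_iff.2 fun i _ => (graySum_ne_zero_iff _ _).2 (card_leeCols _))

theorem card_and_rho_leeWord_univ :
    (leeWord v univ).card = 2 * freq v 1 + 2 * freq v 3 + 2 ∧
      rho (Dv v) (leeWord v univ) = 1 := by
  have hJ : Jchar (Dv v) (leeWord v univ) = 4 ^ n := by
    rw [Jchar_Dv_eq_re, jWord_leeWord]
    simp only [card_univ, Fintype.card_fin, Nat.cast_ofNat, grayCoeff_univ, one_mul,
      graySum_two_mul _ _ (card_leeCols _), prod_const, Fintype.card_fin]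
    exact_mod_cast Zsqrtd.re_intCast (4 ^ n)
  have hJ0 : Jchar (Dv v) (leeWord v univ) ≠ 0 := by rw [hJ]; positivity
  refine ⟨card_eq_of_card_colsAt_zero_eq_two v (by simp [leeWord]) hJ0, ?_⟩
  rw [rho_Dv_eq, hJ]
  simp

theorem exists_card_eq_and_rho_eq : ∃ s : Finset (Fin (n + 1) × Fin 2),
    s.card = freq v 1 + 2 * freq v 2 + freq v 3 + 1 ∧
      rho (Dv v) s = 1 / 2 ^ ((freq v 1 + freq v 3) / 2) := by
  obtain ⟨t, N, hN, hW₀⟩ := jWord_eq_of_card_colsAt_zero_eq_one v (by simp [leeWord])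
    (jWord_leeWord_ne_zero v {0})
  have hW₁ : jWord v (leeWord v {1}) = iChar (t + 1) * (1 + Zsqrtd.sqrtd) ^ N := by
    rw [AddChar.map_add_eq_mul, mul_comm (iChar t), mul_assoc, ← hW₀]
    simp only [jWord_leeWord, card_singleton, grayCoeff_singleton_one, mul_assoc]
  have key : ∀ T₀ : Finset (Fin 2), T₀.card = 1 →
      |Jchar (Dv v) (leeWord v T₀)| = 2 ^ (N / 2) →
      (leeWord v T₀).card = freq v 1 + 2 * freq v 2 + freq v 3 + 1 ∧
        rho (Dv v) (leeWord v T₀) = 1 / 2 ^ ((freq v 1 + freq v 3) / 2) := by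
    intro T₀ hT₀ hJ
    have hJ0 : Jchar (Dv v) (leeWord v T₀) ≠ 0 := abs_pos.1 (by rw [hJ]; positivity)
    refine ⟨card_eq_of_card_colsAt_zero_eq_one v (by simpa [leeWord]) hJ0, ?_⟩
    rw [rho_Dv_eq, ← two_pow_div_four_pow hN, ← Int.cast_abs, hJ]
    push_cast
    rfl
  rcases abs_re_iChar_mul_one_add_sqrtd_pow_eq_or t N with h | h
  · exact ⟨_, key {0} rfl (by rw [Jchar_Dv_eq_re, hW₀, h])⟩
  · exact ⟨_, key {1} rfl (by rw [Jchar_Dv_eq_re, hW₁, h])⟩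

theorem rho_Dv_eq_zero_of_card_lt {s : Finset (Fin (n + 1) × Fin 2)} (hs : s.Nonempty)
    (h₁ : s.card < freq v 1 + 2 * freq v 2 + freq v 3 + 1)
    (h₂ : s.card < 2 * freq v 1 + 2 * freq v 3 + 2) : rho (Dv v) s = 0 := by
  have hJ : Jchar (Dv v) s = 0 := by
    by_contra hJ
    rcases card_colsAt_zero_of_Jchar_ne_zero v hs hJ with h0 | h0
    · exact h₁.ne (card_eq_of_card_colsAt_zero_eq_one v h0 hJ)
    · exact h₂.ne (card_eq_of_card_colsAt_zero_eq_two v h0 hJ)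
  exact rho_eq_zero_of_Jchar_eq_zero hJ

theorem rho_Dv_le_of_card_ne {s : Finset (Fin (n + 1) × Fin 2)} (hs : s.Nonempty)
    (h₂ : s.card ≠ 2 * freq v 1 + 2 * freq v 3 + 2) :
    rho (Dv v) s ≤ 1 / 2 ^ ((freq v 1 + freq v 3) / 2) := by
  by_cases hJ : Jchar (Dv v) s = 0
  · rw [rho_eq_zero_of_Jchar_eq_zero hJ]
    positivity
  rcases card_colsAt_zero_of_Jchar_ne_zero v hs hJ with h0 | h0
  · exact rho_Dv_le_of_card_colsAt_zero_eq_one v h0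
  · exact absurd (card_eq_of_card_colsAt_zero_eq_two v h0 hJ) h₂

end Design

/-- Corollary 2: the generalized resolution of `D` equals `k₂` if `k₁ ≥ k₂`
and `k₁ + 1 − ρ` otherwise. -/
theorem statement6 (n : ℕ) (v : Fin n → ZMod 4)
    (f1 f2 f3 : ℕ) (h1 : f1 = freq v 1) (h2 : f2 = freq v 2) (h3 : f3 = freq v 3)
    (k1 k2 : ℕ) (hk1 : k1 = f1 + 2 * f2 + f3 + 1) (hk2 : k2 = 2 * f1 + 2 * f3 + 2)
    (p : ℚ) (hp : p = 1 / 2 ^ ((f1 + f3) / 2)) :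
    hasResolution (Dv v) (if k2 ≤ k1 then (k2 : ℚ) else (k1 : ℚ) + 1 - p) := by
  subst h1 h2 h3 hk1 hk2 hp
  have hDv : ∀ u c, |Dv v u c| ≤ 1 := fun u c => abs_gray_le_one _ _
  split_ifs with hle
  · obtain ⟨hcard, hrho⟩ := card_and_rho_leeWord_univ v
    refine ⟨_, 1, ⟨_, hcard, hrho ▸ one_pos⟩,
      fun s hs hlt => rho_Dv_eq_zero_of_card_lt v hs (by omega) hlt, ⟨_, hcard, hrho⟩,
      fun s _ => rho_le_one hDv s, by push_cast; ring⟩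
  · obtain ⟨s₀, hcard, hrho⟩ := exists_card_eq_and_rho_eq v
    refine ⟨_, _, ⟨s₀, hcard, hrho ▸ by positivity⟩,
      fun s hs hlt => rho_Dv_eq_zero_of_card_lt v hs hlt (by omega), ⟨s₀, hcard, hrho⟩,
      fun s hs => rho_Dv_le_of_card_ne v (card_pos.1 (by omega)) (by omega), by push_cast; ring⟩
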